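/- arXiv:1806.09203 — 11 statements merged into one kernel-verified Lean document; each statement's English description precedes it below -/
import Mathlib

section
/- In a pseudocomplemented Kleene algebra, x* ≤ ∼x ≤ x⁺, where x⁺ = ∼((∼x)*). -/
/-- In a pseudocomplemented Kleene algebra, `x* ≤ ∼x ≤ x⁺` where `x⁺ = ∼((∼x)*)`. -/
theorem pcKleene_star_le_neg_le_plus {L : Type*} [DistribLattice L] [BoundedOrder L]
    (n : L → L) (s : L → L)
    (hinv : ∀ x, n (n x) = x)
    (hanti : ∀ x y, x ≤ y → n y ≤ n x)
    (hK : ∀ x y, x ⊓ n x ≤ y ⊔ n y)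
    (hpc : ∀ x z, x ⊓ z = ⊥ ↔ z ≤ s x)
    (x : L) : s x ≤ n x ∧ n x ≤ n (s (n x)) := by
  have ntop : n ⊥ = ⊤ := by
    have := hanti ⊥ (n ⊤) bot_le
    rw [hinv] at this
    exact le_antisymm le_top this
  -- key lemma: a ⊓ b = ⊥ → a ≤ n b
  have key : ∀ a b : L, a ⊓ b = ⊥ → a ≤ n b := by
    intro a b hab
    have hdm : n a ⊔ n b = ⊤ := by
      have h1 : n a ⊔ n b ≤ n (a ⊓ b) :=
        sup_le (hanti _ _ inf_le_left) (hanti _ _ inf_le_right)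
      have h2 : n (a ⊓ b) ≤ n a ⊔ n b := by
        have hx : n (n a ⊔ n b) ≤ a := by
          have := hanti (n a) (n a ⊔ n b) le_sup_left
          rwa [hinv] at this
        have hy : n (n a ⊔ n b) ≤ b := by
          have := hanti (n b) (n a ⊔ n b) le_sup_right
          rwa [hinv] at this
        have := hanti (n (n a ⊔ n b)) (a ⊓ b) (le_inf hx hy)
        rwa [hinv] at this
      rw [hab, ntop] at h2
      exact le_antisymm le_top h2
    have hstep : a ⊓ n a ≤ n b := by
      have h3 : a ⊓ n a ≤ (a ⊓ n a) ⊓ (b ⊔ n b) := le_inf le_rfl (hK a b)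
      have h4 : (a ⊓ n a) ⊓ (b ⊔ n b) = ((a ⊓ n a) ⊓ b) ⊔ ((a ⊓ n a) ⊓ n b) :=
        inf_sup_left _ _ _
      have h5 : (a ⊓ n a) ⊓ b ≤ ⊥ := by
        calc (a ⊓ n a) ⊓ b ≤ a ⊓ b := inf_le_inf_right b inf_le_left
        _ = ⊥ := hab
      calc a ⊓ n a ≤ ((a ⊓ n a) ⊓ b) ⊔ ((a ⊓ n a) ⊓ n b) := h4 ▸ h3
        _ ≤ ⊥ ⊔ n b := sup_le_sup h5 inf_le_right
        _ = n b := bot_sup_eq _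
    calc a = a ⊓ (n a ⊔ n b) := by rw [hdm, inf_top_eq]
      _ = (a ⊓ n a) ⊔ (a ⊓ n b) := inf_sup_left _ _ _
      _ ≤ n b ⊔ n b := sup_le_sup hstep inf_le_right
      _ = n b := sup_idem _
  have h1 : s x ≤ n x := key (s x) x (by rw [inf_comm]; exact (hpc x (s x)).mpr le_rfl)
  refine ⟨h1, ?_⟩
  have h2 : s (n x) ≤ x := by
    have := key (s (n x)) (n x) (by rw [inf_comm]; exact (hpc (n x) (s (n x))).mpr le_rfl)
    rwa [hinv] at this
  exact hanti _ _ h2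
end

section
/- Let L be a regular double Stone algebra, where regularity means x* = y* and x⁺ = y⁺ imply x = y. Define ∼x = (x ∧ x⁺) ∨ x*. Then ∼∼x = x for all x ∈ L. -/
/-- In a regular double Stone algebra, with `∼x = (x ⊓ x⁺) ⊔ x*`, we have `∼∼x = x`. -/
theorem regDoubleStone_neg_involutive {L : Type*} [DistribLattice L] [BoundedOrder L]
    (s : L → L) (d : L → L)
    (hpc : ∀ x z, x ⊓ z = ⊥ ↔ z ≤ s x)
    (hdpc : ∀ x z, x ⊔ z = ⊤ ↔ d x ≤ z)
    (hStone : ∀ x, s x ⊔ s (s x) = ⊤)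
    (hdStone : ∀ x, d x ⊓ d (d x) = ⊥)
    (hreg : ∀ x y, s x = s y → d x = d y → x = y)
    (x : L) : ((((x ⊓ d x) ⊔ s x) ⊓ d ((x ⊓ d x) ⊔ s x)) ⊔ s ((x ⊓ d x) ⊔ s x)) = x := by
  -- basic facts about the pseudocomplement `s` and dual pseudocomplement `d`
  have compl : ∀ a : L, a ⊓ s a = ⊥ := fun a => (hpc a (s a)).2 le_rfl
  have supd : ∀ a : L, a ⊔ d a = ⊤ := fun a => (hdpc a (d a)).2 le_rfl
  have s_anti : ∀ a b : L, a ≤ b → s b ≤ s a := by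
    intro a b hab
    refine (hpc a (s b)).1 (le_bot_iff.1 ?_)
    calc a ⊓ s b ≤ b ⊓ s b := inf_le_inf_right _ hab
    _ = ⊥ := compl b
  have d_anti : ∀ a b : L, a ≤ b → d b ≤ d a := by
    intro a b hab
    refine (hdpc b (d a)).1 (top_le_iff.1 ?_)
    calc (⊤ : L) = a ⊔ d a := (supd a).symm
    _ ≤ b ⊔ d a := sup_le_sup_right hab _
  have le_ss : ∀ a : L, a ≤ s (s a) := by
    intro a; exact (hpc (s a) a).1 (by rw [inf_comm]; exact compl a)
  have dd_le : ∀ a : L, d (d a) ≤ a := by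
    intro a; exact (hdpc (d a) a).1 (by rw [sup_comm]; exact supd a)
  have sss : ∀ a : L, s (s (s a)) = s a :=
    fun a => le_antisymm (s_anti _ _ (le_ss a)) (le_ss (s a))
  have ddd : ∀ a : L, d (d (d a)) = d a :=
    fun a => le_antisymm (dd_le (d a)) (d_anti _ _ (dd_le a))
  have s_sup : ∀ a b : L, s (a ⊔ b) = s a ⊓ s b := by
    intro a b
    refine le_antisymm (le_inf (s_anti _ _ le_sup_left) (s_anti _ _ le_sup_right)) ?_
    refine (hpc (a ⊔ b) (s a ⊓ s b)).1 (le_bot_iff.1 ?_)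
    rw [inf_sup_right]
    refine sup_le ?_ ?_
    · calc a ⊓ (s a ⊓ s b) ≤ a ⊓ s a := inf_le_inf_left _ inf_le_left
      _ = ⊥ := compl a
    · calc b ⊓ (s a ⊓ s b) ≤ b ⊓ s b := inf_le_inf_left _ inf_le_right
      _ = ⊥ := compl b
  have d_inf : ∀ a b : L, d (a ⊓ b) = d a ⊔ d b := by
    intro a b
    refine le_antisymm ?_ (sup_le (d_anti _ _ inf_le_left) (d_anti _ _ inf_le_right))
    refine (hdpc (a ⊓ b) (d a ⊔ d b)).1 (top_le_iff.1 ?_)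
    rw [sup_inf_right]
    refine le_inf ?_ ?_
    · calc (⊤ : L) = a ⊔ d a := (supd a).symm
      _ ≤ a ⊔ (d a ⊔ d b) := sup_le_sup_left le_sup_left _
    · calc (⊤ : L) = b ⊔ d b := (supd b).symm
      _ ≤ b ⊔ (d a ⊔ d b) := sup_le_sup_left le_sup_right _
  -- `d ⊥ = ⊤` and hence `d a ⊔ d (d a) = ⊤` (dual of the Stone identity)
  have d_bot : d (⊥ : L) = ⊤ := by
    have := supd (⊥ : L); rwa [bot_sup_eq] at this
  have dtop : ∀ a : L, d a ⊔ d (d a) = ⊤ := by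
    intro a
    have h := d_inf (d a) (d (d a))
    rw [hdStone a, d_bot, ddd a] at h
    rw [sup_comm]; exact h.symm
  -- Stone law for meets: `s (a ⊓ b) = s a ⊔ s b`
  have s_inf : ∀ a b : L, s (a ⊓ b) = s a ⊔ s b := by
    intro a b
    refine le_antisymm ?_ (sup_le (s_anti _ _ inf_le_left) (s_anti _ _ inf_le_right))
    have h1 : s (a ⊓ b) = (s (a ⊓ b) ⊓ s a) ⊔ (s (a ⊓ b) ⊓ s (s a)) := by
      rw [← inf_sup_left, hStone a, inf_top_eq]
    rw [h1]
    refine sup_le (le_sup_of_le_left inf_le_right) (le_sup_of_le_right ?_)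
    refine (hpc b _).1 (le_antisymm ?_ bot_le)
    have hba : b ⊓ s (a ⊓ b) ≤ s a := by
      refine (hpc a _).1 (le_antisymm ?_ bot_le)
      calc a ⊓ (b ⊓ s (a ⊓ b)) = (a ⊓ b) ⊓ s (a ⊓ b) := by rw [inf_assoc]
      _ ≤ ⊥ := le_of_eq (compl (a ⊓ b))
    calc b ⊓ (s (a ⊓ b) ⊓ s (s a)) = (b ⊓ s (a ⊓ b)) ⊓ s (s a) := by rw [inf_assoc]
    _ ≤ s a ⊓ s (s a) := inf_le_inf_right _ hba
    _ ≤ ⊥ := le_of_eq (compl (s a))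
  -- dual Stone law for joins: `d (a ⊔ b) = d a ⊓ d b`
  have d_sup : ∀ a b : L, d (a ⊔ b) = d a ⊓ d b := by
    intro a b
    refine le_antisymm (le_inf (d_anti _ _ le_sup_left) (d_anti _ _ le_sup_right)) ?_
    have h1 : d (a ⊔ b) = (d (a ⊔ b) ⊔ d a) ⊓ (d (a ⊔ b) ⊔ d (d a)) := by
      rw [← sup_inf_left, hdStone a, sup_bot_eq]
    rw [h1]
    refine le_inf (le_sup_of_le_right inf_le_left) (le_trans inf_le_right ?_)
    refine (hdpc b _).1 (le_antisymm le_top ?_)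
    have hba : d a ≤ b ⊔ d (a ⊔ b) := by
      refine (hdpc a _).1 ?_
      rw [← sup_assoc]; exact supd (a ⊔ b)
    calc (⊤ : L) ≤ d a ⊔ d (d a) := le_of_eq (dtop a).symm
    _ ≤ (b ⊔ d (a ⊔ b)) ⊔ d (d a) := sup_le_sup_right hba _
    _ ≤ b ⊔ (d (a ⊔ b) ⊔ d (d a)) := le_of_eq (sup_assoc b (d (a ⊔ b)) (d (d a)))
  -- `s a ≤ d a`
  have s_le_d : ∀ a : L, s a ≤ d a := by
    intro a
    calc s a = s a ⊓ (a ⊔ d a) := by rw [supd a, inf_top_eq]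
    _ = (s a ⊓ a) ⊔ (s a ⊓ d a) := inf_sup_left _ _ _
    _ = s a ⊓ d a := by rw [inf_comm (s a) a, compl a, bot_sup_eq]
    _ ≤ d a := inf_le_right
  -- `d (s a) = s (s a)` and `s (d a) = d (d a)`
  have dsa : ∀ a : L, d (s a) = s (s a) := by
    intro a
    refine le_antisymm ((hdpc (s a) _).1 (hStone a)) ?_
    calc s (s a) = s (s a) ⊓ (s a ⊔ d (s a)) := by rw [supd (s a), inf_top_eq]
    _ = (s (s a) ⊓ s a) ⊔ (s (s a) ⊓ d (s a)) := inf_sup_left _ _ _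
    _ = s (s a) ⊓ d (s a) := by rw [inf_comm (s (s a)) (s a), compl (s a), bot_sup_eq]
    _ ≤ d (s a) := inf_le_right
  have sda : ∀ a : L, s (d a) = d (d a) := by
    intro a
    refine le_antisymm ?_ ((hpc (d a) _).1 (hdStone a))
    calc s (d a) = s (d a) ⊓ (d a ⊔ d (d a)) := by rw [dtop a, inf_top_eq]
    _ = (s (d a) ⊓ d a) ⊔ (s (d a) ⊓ d (d a)) := inf_sup_left _ _ _
    _ = s (d a) ⊓ d (d a) := by rw [inf_comm (s (d a)) (d a), compl (d a), bot_sup_eq]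
    _ ≤ d (d a) := inf_le_right
  -- the two key computations: `s (∼y)` and `d (∼y)`
  have sN : ∀ y : L, s ((y ⊓ d y) ⊔ s y) = d (d y) ⊓ s (s y) := by
    intro y
    calc s ((y ⊓ d y) ⊔ s y) = s (y ⊓ d y) ⊓ s (s y) := s_sup _ _
    _ = (s y ⊔ s (d y)) ⊓ s (s y) := by rw [s_inf]
    _ = (s y ⊔ d (d y)) ⊓ s (s y) := by rw [sda y]
    _ = (s y ⊓ s (s y)) ⊔ (d (d y) ⊓ s (s y)) := inf_sup_right _ _ _
    _ = ⊥ ⊔ (d (d y) ⊓ s (s y)) := by rw [compl (s y)]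
    _ = d (d y) ⊓ s (s y) := bot_sup_eq _
  have dN : ∀ y : L, d ((y ⊓ d y) ⊔ s y) = s (s y) := by
    intro y
    rw [d_sup, d_inf, dtop y, top_inf_eq, dsa y]
  -- conclude by regularity
  refine hreg _ x ?_ ?_
  · rw [sN ((x ⊓ d x) ⊔ s x), dN x, sN x, dsa (s x), sss x, s_inf, sda (d x), ddd x, sss x]
    rw [sup_comm (d x) (s x), sup_eq_right.2 (s_le_d x)]
    exact inf_eq_left.2 (s_le_d x)
  · rw [dN ((x ⊓ d x) ⊔ s x), sN x, s_inf, sda (d x), ddd x, sss x]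
    rw [sup_comm (d x) (s x), sup_eq_right.2 (s_le_d x)]
end

section
/- Let L be a regular double Stone algebra with ∼x := (x ∧ x⁺) ∨ x*. Then ∼ satisfies the De Morgan law ∼x ∨ ∼y = ∼(x ∧ y). -/
/-- In a regular double Stone algebra, `∼x := (x ⊓ x⁺) ⊔ x*` satisfies the
De Morgan law `∼x ⊔ ∼y = ∼(x ⊓ y)`. -/
theorem regDoubleStone_deMorgan {L : Type*} [DistribLattice L] [BoundedOrder L]
    (s : L → L) (d : L → L)
    (hpc : ∀ x z, x ⊓ z = ⊥ ↔ z ≤ s x)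
    (hdpc : ∀ x z, x ⊔ z = ⊤ ↔ d x ≤ z)
    (hStone : ∀ x, s x ⊔ s (s x) = ⊤)
    (hdStone : ∀ x, d x ⊓ d (d x) = ⊥)
    (hreg : ∀ x y, s x = s y → d x = d y → x = y)
    (x y : L) :
    ((x ⊓ d x) ⊔ s x) ⊔ ((y ⊓ d y) ⊔ s y) = ((x ⊓ y) ⊓ d (x ⊓ y)) ⊔ s (x ⊓ y) := by
  have hbot : ∀ a : L, a ⊓ s a = ⊥ := fun a => (hpc a (s a)).mpr le_rfl
  have htop : ∀ a : L, a ⊔ d a = ⊤ := fun a => (hdpc a (d a)).mpr le_rfl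
  have smono : ∀ a b : L, a ≤ b → s b ≤ s a := fun a b h =>
    (hpc a (s b)).mp (le_antisymm ((inf_le_inf_right _ h).trans (hbot b).le) bot_le)
  have dmono : ∀ a b : L, a ≤ b → d b ≤ d a := by
    intro a b h
    apply (hdpc b (d a)).mp
    apply top_unique
    rw [← htop a]
    exact sup_le_sup_right h _
  have dmeet : ∀ a b : L, d (a ⊓ b) = d a ⊔ d b := by
    intro a b
    apply le_antisymm
    · apply (hdpc _ _).mp
      rw [sup_inf_right, ← sup_assoc, htop a, top_sup_eq,
        sup_comm (d a) (d b), ← sup_assoc, htop b, top_sup_eq]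
      exact inf_idem _
    · exact sup_le (dmono _ _ inf_le_left) (dmono _ _ inf_le_right)
  have smeet : ∀ a b : L, s (a ⊓ b) = s a ⊔ s b := by
    intro a b
    apply le_antisymm
    · have hx : a ⊓ (b ⊓ s (a ⊓ b)) = ⊥ := by rw [← inf_assoc]; exact hbot (a ⊓ b)
      have h2 : b ⊓ s (a ⊓ b) ≤ s a := (hpc a _).mp hx
      have h1 : b ⊓ (s (s a) ⊓ s (a ⊓ b)) = ⊥ := by
        apply le_antisymm _ bot_le
        have t1 : b ⊓ (s (s a) ⊓ s (a ⊓ b)) ≤ s a := by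
          refine le_trans ?_ h2
          exact le_inf inf_le_left (inf_le_right.trans inf_le_right)
        have t2 : b ⊓ (s (s a) ⊓ s (a ⊓ b)) ≤ s (s a) :=
          inf_le_right.trans inf_le_left
        exact (le_inf t1 t2).trans (hbot (s a)).le
      have h3 : s (s a) ⊓ s (a ⊓ b) ≤ s b := (hpc b _).mp h1
      calc s (a ⊓ b) = (s a ⊔ s (s a)) ⊓ s (a ⊓ b) := by rw [hStone a, top_inf_eq]
        _ = s a ⊓ s (a ⊓ b) ⊔ s (s a) ⊓ s (a ⊓ b) := inf_sup_right _ _ _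
        _ ≤ s a ⊔ s b := sup_le_sup inf_le_left h3
    · exact sup_le (smono _ _ inf_le_left) (smono _ _ inf_le_right)
  have key : ∀ a b : L, a ⊓ d a ≤ b ⊔ s b := by
    intro a b
    set e := a ⊓ d a with he
    set f := b ⊔ s b with hf
    have hsf : s f = ⊥ := by
      apply le_antisymm _ bot_le
      have := le_inf (smono b f le_sup_left) (smono (s b) f le_sup_right)
      calc s f ≤ s b ⊓ s (s b) := by
            exact le_inf (smono b f le_sup_left) (smono (s b) f le_sup_right)
        _ = ⊥ := hbot (s b)
    have hde : d e = ⊤ := by rw [he, dmeet, htop]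
    have hs : s (e ⊓ f) = s e := by rw [smeet, hsf, sup_bot_eq]
    have hd : d (e ⊓ f) = d e := by rw [dmeet, hde, top_sup_eq]
    have := hreg (e ⊓ f) e hs hd
    exact inf_eq_left.mp this
  rw [smeet, dmeet]
  apply le_antisymm
  · have hx : x ⊓ d x ≤ x ⊓ y ⊓ (d x ⊔ d y) ⊔ (s x ⊔ s y) := by
      calc x ⊓ d x = (x ⊓ d x) ⊓ (y ⊔ s y) := (inf_eq_left.mpr (key x y)).symm
        _ = (x ⊓ d x ⊓ y) ⊔ (x ⊓ d x ⊓ s y) := inf_sup_left _ _ _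
        _ ≤ x ⊓ y ⊓ (d x ⊔ d y) ⊔ (s x ⊔ s y) := by
            apply sup_le_sup
            · exact le_inf (le_inf (inf_le_left.trans inf_le_left) inf_le_right)
                ((inf_le_left.trans inf_le_right).trans le_sup_left)
            · exact inf_le_right.trans le_sup_right
    have hy : y ⊓ d y ≤ x ⊓ y ⊓ (d x ⊔ d y) ⊔ (s x ⊔ s y) := by
      calc y ⊓ d y = (y ⊓ d y) ⊓ (x ⊔ s x) := (inf_eq_left.mpr (key y x)).symm
        _ = (y ⊓ d y ⊓ x) ⊔ (y ⊓ d y ⊓ s x) := inf_sup_left _ _ _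
        _ ≤ x ⊓ y ⊓ (d x ⊔ d y) ⊔ (s x ⊔ s y) := by
            apply sup_le_sup
            · exact le_inf (le_inf inf_le_right (inf_le_left.trans inf_le_left))
                ((inf_le_left.trans inf_le_right).trans le_sup_right)
            · exact inf_le_right.trans le_sup_left
    exact sup_le (sup_le hx (le_sup_right.trans' le_sup_left))
      (sup_le hy (le_sup_right.trans' le_sup_right))
  · apply sup_le
    · rw [inf_sup_left]
      apply sup_le
      · exact le_sup_left.trans' (le_sup_left.trans'
          (le_inf (inf_le_left.trans inf_le_left) inf_le_right))
      · exact le_sup_right.trans' (le_sup_left.trans'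
          (le_inf (inf_le_left.trans inf_le_right) inf_le_right))
    · exact sup_le (le_sup_left.trans' le_sup_right) (le_sup_right.trans' le_sup_right)
end

section
/- Let L be a regular double Stone algebra satisfying condition (D): x ∧ x⁺ ≤ y ∨ y* for all x, y. With ∼x := (x ∧ x⁺) ∨ x*, the Kleene inequality x ∧ ∼x ≤ y ∨ ∼y holds for all x, y. -/
/-- In a regular double Stone algebra satisfying (D): `x ⊓ x⁺ ≤ y ⊔ y*`,
with `∼x := (x ⊓ x⁺) ⊔ x*`, the Kleene inequality `x ⊓ ∼x ≤ y ⊔ ∼y` holds. -/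
theorem regDoubleStone_kleene_ineq {L : Type*} [DistribLattice L] [BoundedOrder L]
    (s : L → L) (d : L → L)
    (hpc : ∀ x z, x ⊓ z = ⊥ ↔ z ≤ s x)
    (hdpc : ∀ x z, x ⊔ z = ⊤ ↔ d x ≤ z)
    (hStone : ∀ x, s x ⊔ s (s x) = ⊤)
    (hdStone : ∀ x, d x ⊓ d (d x) = ⊥)
    (hreg : ∀ x y, s x = s y → d x = d y → x = y)
    (hD : ∀ x y, x ⊓ d x ≤ y ⊔ s y)
    (x y : L) :
    x ⊓ ((x ⊓ d x) ⊔ s x) ≤ y ⊔ ((y ⊓ d y) ⊔ s y) := by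
  have h1 : x ⊓ s x = ⊥ := (hpc x (s x)).mpr le_rfl
  have h2 : x ⊓ ((x ⊓ d x) ⊔ s x) = x ⊓ d x := by
    rw [inf_sup_left, h1, sup_bot_eq, ← inf_assoc, inf_idem]
  rw [h2]
  calc x ⊓ d x ≤ y ⊔ s y := hD x y
    _ ≤ y ⊔ ((y ⊓ d y) ⊔ s y) := sup_le_sup_left le_sup_right y
end

section
/- In a regular pseudocomplemented Kleene algebra satisfying the Stone identity x* ∨ x** = 1, the De Morgan operation ∼ is uniquely determined: if ∼₁ and ∼₂ both make (L, ∨, ∧, ∼, *, 0, 1) a regular pseudocomplemented Kleene algebra satisfying the Stone identity, then ∼₁x = ∼₂x for all x. Indeed, ∼x = (x ∧ x⁺) ∨ x* where x⁺ = ∼((∼x)*). -/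
section Aux

variable {L : Type*} [DistribLattice L] [BoundedOrder L]

namespace RegPcKleeneAux

variable (s : L → L) (hpc : ∀ x z, x ⊓ z = ⊥ ↔ z ≤ s x)

include hpc in
theorem x_meet_s (x : L) : x ⊓ s x = ⊥ := (hpc x (s x)).2 le_rfl

include hpc in
theorem s_anti {x y : L} (h : x ≤ y) : s y ≤ s x :=
  (hpc x (s y)).1 (le_bot_iff.1 (le_trans (inf_le_inf_right _ h) (x_meet_s s hpc y).le))

include hpc in
theorem le_ss (x : L) : x ≤ s (s x) :=
  (hpc (s x) x).1 (by rw [inf_comm]; exact x_meet_s s hpc x)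

include hpc in
theorem sss (x : L) : s (s (s x)) = s x :=
  le_antisymm (s_anti s hpc (le_ss s hpc x)) (le_ss s hpc (s x))

include hpc in
theorem s_sup (a b : L) : s (a ⊔ b) = s a ⊓ s b := by
  refine le_antisymm (le_inf (s_anti s hpc le_sup_left) (s_anti s hpc le_sup_right)) ?_
  refine (hpc (a ⊔ b) (s a ⊓ s b)).1 ?_
  rw [inf_sup_right]
  refine le_bot_iff.1 (sup_le ?_ ?_)
  · exact le_trans (inf_le_inf_left a inf_le_left) (x_meet_s s hpc a).le
  · exact le_trans (inf_le_inf_left b inf_le_right) (x_meet_s s hpc b).le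

variable (hStone : ∀ x, s x ⊔ s (s x) = ⊤)

include hpc hStone in
theorem s_inf (a b : L) : s (a ⊓ b) = s a ⊔ s b := by
  refine le_antisymm ?_ (sup_le (s_anti s hpc inf_le_left) (s_anti s hpc inf_le_right))
  have h1 : s (a ⊓ b) ⊓ b ≤ s a := by
    refine (hpc a (s (a ⊓ b) ⊓ b)).1 (le_bot_iff.1 ?_)
    calc a ⊓ (s (a ⊓ b) ⊓ b) = (a ⊓ b) ⊓ s (a ⊓ b) := by ac_rfl
    _ ≤ ⊥ := (x_meet_s s hpc (a ⊓ b)).le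
  have h2 : s (a ⊓ b) ⊓ s (s a) ≤ s b := by
    refine (hpc b (s (a ⊓ b) ⊓ s (s a))).1 (le_bot_iff.1 ?_)
    calc b ⊓ (s (a ⊓ b) ⊓ s (s a)) = (s (a ⊓ b) ⊓ b) ⊓ s (s a) := by ac_rfl
    _ ≤ s a ⊓ s (s a) := inf_le_inf_right _ h1
    _ ≤ ⊥ := (x_meet_s s hpc (s a)).le
  calc s (a ⊓ b) = s (a ⊓ b) ⊓ (s a ⊔ s (s a)) := by rw [hStone a, inf_top_eq]
  _ = (s (a ⊓ b) ⊓ s a) ⊔ (s (a ⊓ b) ⊓ s (s a)) := inf_sup_left _ _ _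
  _ ≤ s a ⊔ s b := sup_le (le_sup_of_le_left inf_le_right) (le_sup_of_le_right h2)

variable (n : L → L) (hinv : ∀ x, n (n x) = x) (hanti : ∀ x y, x ≤ y → n y ≤ n x)

include hinv hanti in
theorem n_le_n {x y : L} : x ≤ y ↔ n y ≤ n x := by
  refine ⟨hanti x y, fun h => ?_⟩
  have := hanti _ _ h
  rwa [hinv, hinv] at this

include hinv hanti in
theorem n_sup (a b : L) : n (a ⊔ b) = n a ⊓ n b := by
  refine le_antisymm (le_inf (hanti _ _ le_sup_left) (hanti _ _ le_sup_right)) ?_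
  have h : a ⊔ b ≤ n (n a ⊓ n b) := by
    refine sup_le ?_ ?_
    · rw [n_le_n n hinv hanti, hinv]; exact inf_le_left
    · rw [n_le_n n hinv hanti, hinv]; exact inf_le_right
  have h2 := hanti _ _ h
  rwa [hinv] at h2

include hinv hanti in
theorem n_inf (a b : L) : n (a ⊓ b) = n a ⊔ n b := by
  have := congrArg n (n_sup n hinv hanti (n a) (n b))
  rwa [hinv, hinv, hinv, eq_comm] at this

include hinv hanti in
theorem n_bot : n ⊥ = ⊤ := by
  have : n (n ⊤) ≤ n ⊥ := hanti _ _ bot_le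
  rw [hinv] at this
  exact le_antisymm le_top this

include hinv hanti in
theorem n_top : n ⊤ = ⊥ := by
  rw [← n_bot n hinv hanti, hinv]

variable (hK : ∀ x y, x ⊓ n x ≤ y ⊔ n y)

include hinv hanti hK in
theorem n_of_complemented {a b : L} (hm : a ⊓ b = ⊥) (hj : a ⊔ b = ⊤) : n a = b := by
  have hmeet : a ⊓ n a = ⊥ := by
    have h1 : a ⊓ n a ≤ a ⊓ (b ⊔ n b) := le_inf inf_le_left (hK a b)
    rw [inf_sup_left, hm, bot_sup_eq] at h1
    have h2 : a ⊓ n a ≤ n a ⊓ n b :=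
      le_inf inf_le_right (le_trans h1 inf_le_right)
    rw [← n_sup n hinv hanti, hj, n_top n hinv hanti] at h2
    exact le_antisymm h2 bot_le
  have hjoin : a ⊔ n a = ⊤ := by
    have := congrArg n hmeet
    rw [n_inf n hinv hanti, hinv, n_bot n hinv hanti] at this
    rw [sup_comm] at this
    rw [sup_comm]
    rw [sup_comm] at this
    exact this
  refine le_antisymm ?_ ?_
  · calc n a = n a ⊓ (a ⊔ b) := by rw [hj, inf_top_eq]
    _ = (n a ⊓ a) ⊔ (n a ⊓ b) := inf_sup_left _ _ _
    _ = n a ⊓ b := by rw [inf_comm (n a) a, hmeet, bot_sup_eq]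
    _ ≤ b := inf_le_right
  · calc b = b ⊓ (a ⊔ n a) := by rw [hjoin, inf_top_eq]
    _ = (b ⊓ a) ⊔ (b ⊓ n a) := inf_sup_left _ _ _
    _ = b ⊓ n a := by rw [inf_comm b a, hm, bot_sup_eq]
    _ ≤ n a := inf_le_right

include hpc hStone hinv hanti hK in
theorem n_s (x : L) : n (s x) = s (s x) :=
  n_of_complemented n hinv hanti hK (x_meet_s s hpc (s x)) (hStone x)

include hpc hStone hinv hanti hK in
theorem dense_sup (x : L) : s (x ⊔ n x) = ⊥ := by
  set e := s (x ⊔ n x) with he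
  have hex : e ⊓ x = ⊥ := by
    refine le_antisymm ?_ bot_le
    calc e ⊓ x ≤ (x ⊔ n x) ⊓ e := le_inf (le_trans inf_le_right le_sup_left) inf_le_left
    _ = ⊥ := x_meet_s s hpc (x ⊔ n x)
  have hen : e ⊓ n x = ⊥ := by
    refine le_antisymm ?_ bot_le
    calc e ⊓ n x ≤ (x ⊔ n x) ⊓ e := le_inf (le_trans inf_le_right le_sup_right) inf_le_left
    _ = ⊥ := x_meet_s s hpc (x ⊔ n x)
  have h1 : n x ≤ s e := (hpc e (n x)).1 hen
  have h2 : n (s e) ≤ x := by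
    have := hanti _ _ h1
    rwa [hinv] at this
  rw [n_s s hpc hStone n hinv hanti hK e] at h2
  have h3 : e ≤ x := le_trans (le_ss s hpc e) h2
  calc e = e ⊓ x := (inf_eq_left.2 h3).symm
  _ = ⊥ := hex

variable (hreg : ∀ x y, s x = s y → s (n x) = s (n y) → x = y)

include hpc hStone hinv hanti hK hreg in
theorem n_formula (x : L) : n x = (x ⊓ n (s (n x))) ⊔ s x := by
  set t := (x ⊓ n (s (n x))) ⊔ s x with ht
  have hns := n_s s hpc hStone n hinv hanti hK
  have hsn_le : s (n x) ≤ s (s x) := by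
    refine (hpc (s x) (s (n x))).1 ?_
    rw [← s_sup s hpc x (n x)]
    exact dense_sup s hpc hStone n hinv hanti hK x
  have hst : s t = s (n x) := by
    calc s t = s (x ⊓ n (s (n x))) ⊓ s (s x) := s_sup s hpc _ _
    _ = s (x ⊓ s (s (n x))) ⊓ s (s x) := by rw [hns (n x)]
    _ = (s x ⊔ s (s (s (n x)))) ⊓ s (s x) := by rw [s_inf s hpc hStone]
    _ = (s x ⊔ s (n x)) ⊓ s (s x) := by rw [sss s hpc]
    _ = (s x ⊓ s (s x)) ⊔ (s (n x) ⊓ s (s x)) := inf_sup_right _ _ _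
    _ = ⊥ ⊔ (s (n x) ⊓ s (s x)) := by rw [x_meet_s s hpc (s x)]
    _ = s (n x) := by rw [bot_sup_eq, inf_eq_left.2 hsn_le]
  have hnt : s (n t) = s x := by
    have h1 : n t = (n x ⊔ s (n x)) ⊓ s (s x) := by
      rw [ht, n_sup n hinv hanti, n_inf n hinv hanti, hinv, hns x]
    calc s (n t) = s ((n x ⊔ s (n x)) ⊓ s (s x)) := by rw [h1]
    _ = s (n x ⊔ s (n x)) ⊔ s (s (s x)) := s_inf s hpc hStone _ _
    _ = (s (n x) ⊓ s (s (n x))) ⊔ s x := by rw [s_sup s hpc, sss s hpc]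
    _ = ⊥ ⊔ s x := by rw [x_meet_s s hpc (s (n x))]
    _ = s x := bot_sup_eq _
  refine hreg (n x) t hst.symm ?_
  rw [hinv x]
  exact hnt.symm

include hpc hStone hinv hanti hK in
theorem plus_top (x : L) : x ⊔ n (s (n x)) = ⊤ := by
  have h : n (x ⊔ n (s (n x))) = ⊥ := by
    rw [n_sup n hinv hanti, hinv]
    exact x_meet_s s hpc (n x)
  have := congrArg n h
  rwa [hinv, n_bot n hinv hanti] at this

include hpc hinv hanti in
theorem plus_min (x z : L) (h : x ⊔ z = ⊤) : n (s (n x)) ≤ z := by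
  have h1 : n x ⊓ n z = ⊥ := by
    rw [← n_sup n hinv hanti, h, n_top n hinv hanti]
  have h2 : n z ≤ s (n x) := (hpc (n x) (n z)).1 h1
  have h3 := hanti _ _ h2
  rwa [hinv] at h3

end RegPcKleeneAux

end Aux

/-- In a regular pseudocomplemented Kleene algebra satisfying the Stone identity,
the De Morgan operation is unique, and equals `(x ⊓ x⁺) ⊔ x*` with `x⁺ = ∼((∼x)*)`. -/
theorem regPcKleene_stone_neg_unique {L : Type*} [DistribLattice L] [BoundedOrder L]
    (n₁ n₂ : L → L) (s : L → L)
    (hpc : ∀ x z, x ⊓ z = ⊥ ↔ z ≤ s x)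
    (hStone : ∀ x, s x ⊔ s (s x) = ⊤)
    (hinv₁ : ∀ x, n₁ (n₁ x) = x)
    (hanti₁ : ∀ x y, x ≤ y → n₁ y ≤ n₁ x)
    (hK₁ : ∀ x y, x ⊓ n₁ x ≤ y ⊔ n₁ y)
    (hreg₁ : ∀ x y, s x = s y → s (n₁ x) = s (n₁ y) → x = y)
    (hinv₂ : ∀ x, n₂ (n₂ x) = x)
    (hanti₂ : ∀ x y, x ≤ y → n₂ y ≤ n₂ x)
    (hK₂ : ∀ x y, x ⊓ n₂ x ≤ y ⊔ n₂ y)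
    (hreg₂ : ∀ x y, s x = s y → s (n₂ x) = s (n₂ y) → x = y) :
    (∀ x, n₁ x = n₂ x) ∧ (∀ x, n₁ x = (x ⊓ n₁ (s (n₁ x))) ⊔ s x) := by
  open RegPcKleeneAux in
  have hf₁ := n_formula s hpc hStone n₁ hinv₁ hanti₁ hK₁ hreg₁
  have hf₂ := n_formula s hpc hStone n₂ hinv₂ hanti₂ hK₂ hreg₂
  have hp : ∀ x, n₁ (s (n₁ x)) = n₂ (s (n₂ x)) := fun x =>
    le_antisymm
      (plus_min s hpc n₁ hinv₁ hanti₁ x _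
        (plus_top s hpc hStone n₂ hinv₂ hanti₂ hK₂ x))
      (plus_min s hpc n₂ hinv₂ hanti₂ x _
        (plus_top s hpc hStone n₁ hinv₁ hanti₁ hK₁ x))
  refine ⟨fun x => ?_, hf₁⟩
  rw [hf₁ x, hf₂ x, hp x]
end

section
/- Let g be the map P ↦ { x ∈ L : ∼x ∉ P } on prime filters of a Kleene algebra L. Then g(g(P)) = P, P₁ ⊆ P₂ implies g(P₂) ⊆ g(P₁), and every prime filter P is comparable with g(P) (P ⊆ g(P) or g(P) ⊆ P). -/
/-- `P` is a prime filter of a bounded lattice. -/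
def IsPrimeFilter {L : Type*} [Lattice L] (P : Set L) : Prop :=
  P.Nonempty ∧ (∀ x y, x ∈ P → x ≤ y → y ∈ P) ∧ (∀ x y, x ∈ P → y ∈ P → x ⊓ y ∈ P) ∧
    P ≠ Set.univ ∧ (∀ x y, x ⊔ y ∈ P → x ∈ P ∨ y ∈ P)

/-- For the map `g : P ↦ {x | ∼x ∉ P}` on prime filters of a Kleene algebra:
`g(g(P)) = P`, `g` is antitone, and every prime filter is comparable with its image. -/
theorem kleene_g_properties {L : Type*} [DistribLattice L] [BoundedOrder L]
    (n : L → L)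
    (hinv : ∀ x, n (n x) = x)
    (hanti : ∀ x y, x ≤ y → n y ≤ n x)
    (hK : ∀ x y, x ⊓ n x ≤ y ⊔ n y) :
    (∀ P : Set L, IsPrimeFilter P → {x : L | n x ∉ {y : L | n y ∉ P}} = P) ∧
    (∀ P₁ P₂ : Set L, IsPrimeFilter P₁ → IsPrimeFilter P₂ → P₁ ⊆ P₂ →
      {x : L | n x ∉ P₂} ⊆ {x : L | n x ∉ P₁}) ∧
    (∀ P : Set L, IsPrimeFilter P →
      P ⊆ {x : L | n x ∉ P} ∨ {x : L | n x ∉ P} ⊆ P) := by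
  refine ⟨?_, ?_, ?_⟩
  · intro P _
    ext x
    simp [hinv]
  · intro P₁ P₂ _ _ h x hx hc
    exact hx (h hc)
  · intro P ⟨_, hup, hmeet, _, hprime⟩
    by_contra hcon
    push_neg at hcon
    rw [Set.not_subset] at hcon
    rw [Set.not_subset] at hcon
    obtain ⟨⟨a, haP, hna⟩, ⟨b, hnb, hbP⟩⟩ := hcon
    simp only [Set.mem_setOf_eq, not_not] at hna hnb
    have h1 : a ⊓ n a ∈ P := hmeet _ _ haP hna
    have h2 : b ⊔ n b ∈ P := hup _ _ h1 (hK a b)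
    rcases hprime _ _ h2 with h | h
    · exact hbP h
    · exact hnb h
end

section
/- Let (X, ≤, g) be a Kleene–Varlet space, and let U(X) denote the lattice of upward-closed subsets of X. The map A ↦ ∼A := { x ∈ X : g(x) ∉ A } is well defined on U(X) (i.e., ∼A is upward-closed whenever A is), is an order-reversing involution, and satisfies the Kleene condition A ∩ ∼A ⊆ B ∪ ∼B for all upward-closed A, B. -/
/-- In a Kleene–Varlet space `(X, ≤, g)`, the map `A ↦ ∼A = {x | g x ∉ A}` on
up-sets is well defined, an order-reversing involution, and satisfies the
Kleene condition. -/
theorem kleeneVarlet_neg_on_upsets {X : Type*} [PartialOrder X]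
    (g : X → X)
    (hJ1 : ∀ x y, x ≤ y → g y ≤ g x)
    (hJ2 : ∀ x, g (g x) = x)
    (hJ3 : ∀ x, x ≤ g x ∨ g x ≤ x)
    (hJ4 : ∀ a b c : X, a < b → b < c → False) :
    (∀ A : Set X, IsUpperSet A → IsUpperSet {x | g x ∉ A}) ∧
    (∀ A : Set X, IsUpperSet A → {x | g x ∉ {y | g y ∉ A}} = A) ∧
    (∀ A B : Set X, IsUpperSet A → IsUpperSet B → A ⊆ B →
      {x | g x ∉ B} ⊆ {x | g x ∉ A}) ∧
    (∀ A B : Set X, IsUpperSet A → IsUpperSet B →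
      A ∩ {x | g x ∉ A} ⊆ B ∪ {x | g x ∉ B}) := by
  refine ⟨?_, ?_, ?_, ?_⟩
  · intro A hA x y hxy hx hy
    exact hx (hA (hJ1 x y hxy) hy)
  · intro A hA
    ext x
    simp only [Set.mem_setOf_eq, not_not, hJ2]
  · intro A B _ _ hAB x hx hA
    exact hx (hAB hA)
  · intro A B hA hB x ⟨hxA, hxnA⟩
    by_cases hxB : x ∈ B
    · exact Or.inl hxB
    · refine Or.inr fun hgB => ?_
      rcases hJ3 x with h | h
      · exact hxnA (hA h hxA)
      · exact hxB (hB h hgB)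
end

section
/- Let (X, ≤, g) be a Kleene–Varlet space and U(X) the lattice of up-sets with pseudocomplement A* = { x : ↑x ∩ A = ∅ } and ∼A = { x : g(x) ∉ A }. Then (U(X), ∪, ∩, ∼, *, ∅, X) is a regular pseudocomplemented Kleene algebra, i.e., it additionally satisfies: A* = B* and (∼A)* = (∼B)* imply A = B. -/
/-- For a Kleene–Varlet space `(X, ≤, g)`, the pseudocomplemented Kleene algebra of
up-sets, with `A* = {x | ↑x ∩ A = ∅}` and `∼A = {x | g x ∉ A}`, is regular:
`A* = B*` and `(∼A)* = (∼B)*` imply `A = B`. -/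
theorem kleeneVarlet_upsets_regular {X : Type*} [PartialOrder X]
    (g : X → X)
    (hJ1 : ∀ x y, x ≤ y → g y ≤ g x)
    (hJ2 : ∀ x, g (g x) = x)
    (hJ3 : ∀ x, x ≤ g x ∨ g x ≤ x)
    (hJ4 : ∀ a b c : X, a < b → b < c → False)
    (A B : Set X) (hA : IsUpperSet A) (hB : IsUpperSet B)
    (hstar : {x : X | Set.Ici x ∩ A = ∅} = {x : X | Set.Ici x ∩ B = ∅})
    (hnstar : {x : X | Set.Ici x ∩ {y | g y ∉ A} = ∅}
            = {x : X | Set.Ici x ∩ {y | g y ∉ B} = ∅}) :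
    A = B := by
  have key : ∀ (A B : Set X),
      ({x : X | Set.Ici x ∩ A = ∅} = {x : X | Set.Ici x ∩ B = ∅}) →
      ({x : X | Set.Ici x ∩ {y | g y ∉ A} = ∅}
        = {x : X | Set.Ici x ∩ {y | g y ∉ B} = ∅}) →
      A ⊆ B := by
    intro A B hs hn x hxA
    by_cases hmax : ∀ y, x ≤ y → y = x
    · by_contra hxB
      have hx : x ∈ {x : X | Set.Ici x ∩ B = ∅} := by
        simp only [Set.mem_setOf_eq, Set.eq_empty_iff_forall_notMem]
        rintro y ⟨hy, hyB⟩
        exact hxB ((hmax y hy) ▸ hyB)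
      rw [← hs] at hx
      have hmem : x ∈ Set.Ici x ∩ A := ⟨le_refl x, hxA⟩
      rw [hx] at hmem
      exact hmem
    · push_neg at hmax
      obtain ⟨y, hxy, hyx⟩ := hmax
      have hylt : x < y := lt_of_le_of_ne hxy (fun h => hyx h.symm)
      have hmin : ∀ z, z ≤ x → z = x := by
        intro z hz
        by_contra hne
        exact hJ4 z x y (lt_of_le_of_ne hz hne) hylt
      have hgx : g x ∈ {x : X | Set.Ici x ∩ {y | g y ∉ A} = ∅} := by
        simp only [Set.mem_setOf_eq, Set.eq_empty_iff_forall_notMem]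
        rintro w ⟨hw, hwA⟩
        apply hwA
        have hle : g w ≤ x := by
          have := hJ1 _ _ hw
          rwa [hJ2] at this
        rw [hmin _ hle]; exact hxA
      rw [hn] at hgx
      by_contra hxB
      have hmem : g x ∈ Set.Ici (g x) ∩ {y | g y ∉ B} :=
        ⟨le_refl _, by simp only [Set.mem_setOf_eq, hJ2]; exact hxB⟩
      rw [hgx] at hmem
      exact hmem
  exact Set.Subset.antisymm (key A B hstar hnstar) (key B A hstar.symm hnstar.symm)
end

section
/- Let (X, ≤, g) be a Kleene–Varlet space such that (X, ≤) is a disjoint union of chains of at most two elements. Then for every up-set A of X, the pseudocomplement satisfies A* = (A ∪ g[A])ᶜ, where A* = { x : ↑x ∩ A = ∅ } and g[A] = { g(a) : a ∈ A }. -/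
/-- In a Kleene–Varlet space that is a disjoint union of chains of at most two
elements (each element is comparable with at most one other element), the
pseudocomplement of an up-set `A` is `(A ∪ g[A])ᶜ`. -/
theorem kleeneVarlet_disjointChains_star {X : Type*} [PartialOrder X]
    (g : X → X)
    (hJ1 : ∀ x y, x ≤ y → g y ≤ g x)
    (hJ2 : ∀ x, g (g x) = x)
    (hJ3 : ∀ x, x ≤ g x ∨ g x ≤ x)
    (hJ4 : ∀ a b c : X, a < b → b < c → False)
    (hdisj : ∀ x y z : X, x ≠ y → x ≠ z → (x ≤ y ∨ y ≤ x) → (x ≤ z ∨ z ≤ x) → y = z)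
    (A : Set X) (hA : IsUpperSet A) :
    {x : X | Set.Ici x ∩ A = ∅} = (A ∪ g '' A)ᶜ := by
  ext x
  simp only [Set.mem_setOf_eq, Set.mem_compl_iff, Set.mem_union, Set.mem_image,
    Set.eq_empty_iff_forall_notMem, Set.mem_inter_iff, Set.mem_Ici, not_or, not_exists]
  constructor
  · intro h
    refine ⟨fun hxA => h x ⟨le_refl x, hxA⟩, ?_⟩
    rintro a ⟨haA, hax⟩
    have hgx : g x = a := by rw [← hax, hJ2]
    rcases hJ3 x with hle | hle
    · exact h a ⟨hgx ▸ hle, haA⟩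
    · exact h x ⟨le_refl x, hA (hgx ▸ hle) haA⟩
  · rintro ⟨hxA, hgA⟩ y ⟨hxy, hyA⟩
    have hxy' : x ≠ y := fun h => hxA (h ▸ hyA)
    by_cases hg : x = g x
    · -- g x = x; then y ≠ g y, and y comparable with both x and g y forces x = g y
      have hyg : g y ≤ x := hg ▸ hJ1 x y hxy
      have hygy : y ≠ g y := by
        intro h
        exact hxy' (le_antisymm hxy (h ▸ hyg))
      have := hdisj y x (g y) (Ne.symm hxy') hygy (Or.inr hxy) (hJ3 y)
      exact hgA y ⟨hyA, this.symm⟩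
    · have := hdisj x y (g x) hxy' hg (Or.inl hxy) (hJ3 x)
      exact hgA (g x) ⟨this ▸ hyA, hJ2 x⟩
end

section
/- Let (X, ≤, g) be a Kleene–Varlet space. The pseudocomplemented lattice of up-sets U(X), with A* = { x : ↑x ∩ A = ∅ }, satisfies the Stone identity A* ∪ A** = X for all up-sets A if and only if (X, ≤) is a disjoint union of chains of at most two elements. -/
/-- For a Kleene–Varlet space `(X, ≤, g)`, the lattice of up-sets with
`A* = {x | ↑x ∩ A = ∅}` satisfies the Stone identity `A* ∪ A** = X` for every
up-set `A` if and only if `(X, ≤)` is a disjoint union of chains of at most two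
elements. -/
theorem kleeneVarlet_stone_iff_disjointChains {X : Type*} [PartialOrder X]
    (g : X → X)
    (hJ1 : ∀ x y, x ≤ y → g y ≤ g x)
    (hJ2 : ∀ x, g (g x) = x)
    (hJ3 : ∀ x, x ≤ g x ∨ g x ≤ x)
    (hJ4 : ∀ a b c : X, a < b → b < c → False) :
    (∀ A : Set X, IsUpperSet A →
      {x : X | Set.Ici x ∩ A = ∅} ∪ {x : X | Set.Ici x ∩ {y : X | Set.Ici y ∩ A = ∅} = ∅}
        = Set.univ) ↔
    (∀ x y z : X, x ≠ y → x ≠ z → (x ≤ y ∨ y ≤ x) → (x ≤ z ∨ z ≤ x) → y = z) := by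
  constructor
  · intro hS
    have gi : ∀ a b : X, g a = g b → a = b := fun a b h => by
      rw [← hJ2 a, h, hJ2]
    have key : ∀ x y z : X, x < y → x < z → y = z := by
      intro x y z hxy hxz
      by_contra hne
      have hx : x ∈ ({w : X | Set.Ici w ∩ Set.Ici y = ∅} ∪
          {w : X | Set.Ici w ∩ {v : X | Set.Ici v ∩ Set.Ici y = ∅} = ∅}) := by
        rw [hS (Set.Ici y) (isUpperSet_Ici y)]; exact Set.mem_univ x
      rcases hx with h | h
      · have hy : y ∈ Set.Ici x ∩ Set.Ici y := ⟨le_of_lt hxy, le_refl y⟩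
        rw [h] at hy; exact hy
      · have hz : z ∈ {w : X | Set.Ici w ∩ Set.Ici y = ∅} := by
          rw [Set.mem_setOf_eq, Set.eq_empty_iff_forall_notMem]
          rintro w ⟨hzw, hyw⟩
          rcases eq_or_lt_of_le hzw with rfl | hlt
          · exact hJ4 x y z hxy (hyw.lt_of_ne hne)
          · exact hJ4 x z w hxz hlt
        have hzz : z ∈ Set.Ici x ∩ {w : X | Set.Ici w ∩ Set.Ici y = ∅} :=
          ⟨le_of_lt hxz, hz⟩
        rw [h] at hzz; exact hzz
    intro x y z hxy hxz hcy hcz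
    rcases hcy with h1 | h1 <;> rcases hcz with h2 | h2
    · exact key x y z (h1.lt_of_ne hxy) (h2.lt_of_ne hxz)
    · exact (hJ4 z x y (h2.lt_of_ne fun h => hxz h.symm) (h1.lt_of_ne hxy)).elim
    · exact (hJ4 y x z (h1.lt_of_ne fun h => hxy h.symm) (h2.lt_of_ne hxz)).elim
    · have h1' : g x < g y :=
        (hJ1 y x h1).lt_of_ne fun h => hxy (gi x y h)
      have h2' : g x < g z :=
        (hJ1 z x h2).lt_of_ne fun h => hxz (gi x z h)
      exact gi y z (key (g x) (g y) (g z) h1' h2')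
  · intro h A hA
    ext x
    simp only [Set.mem_union, Set.mem_setOf_eq, Set.mem_univ, iff_true]
    by_cases hx : Set.Ici x ∩ A = ∅
    · exact Or.inl hx
    · right
      obtain ⟨a, hax, haA⟩ := Set.nonempty_iff_ne_empty.mpr hx
      rw [Set.eq_empty_iff_forall_notMem]
      rintro w ⟨hxw, hwstar⟩
      rw [Set.mem_setOf_eq, Set.eq_empty_iff_forall_notMem] at hwstar
      by_cases hwx : w = x
      · exact hwstar a ⟨hwx ▸ hax, haA⟩
      by_cases hax' : a = x
      · exact hwstar w ⟨le_refl w, hA hxw (hax' ▸ haA)⟩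
      · have : a = w := h x a w (fun he => hax' he.symm) (fun he => hwx he.symm)
          (Or.inl hax) (Or.inl hxw)
        exact hwstar w ⟨le_refl w, this ▸ haA⟩
end

section
/- Let L be a bounded distributive lattice with pseudocomplement * and let h(x) = { P prime filter : x ∈ P }, mapping into the lattice of up-sets (w.r.t. inclusion) of the set of prime filters with pseudocomplement A* = { P : ↑P ∩ A = ∅ }. Then h is injective and satisfies h(x*) = h(x)* for all x ∈ L. -/
/-- Separation: from a filter disjoint from an ideal we get a prime filter (complement of a
prime ideal) containing the filter and disjoint from the ideal. -/
lemma exists_primeFilter_aux {L : Type*} [DistribLattice L] [BoundedOrder L]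
    (F : Order.PFilter L) (I : Order.Ideal L) (h : Disjoint (F : Set L) (I : Set L)) :
    ∃ P : Set L, IsPrimeFilter P ∧ (F : Set L) ⊆ P ∧ ∀ y ∈ I, y ∉ P := by
  obtain ⟨J, hJ, hIJ, hdisj⟩ := DistribLattice.prime_ideal_of_disjoint_filter_ideal h
  refine ⟨(J : Set L)ᶜ, ⟨?_, ?_, ?_, ?_, ?_⟩, ?_, ?_⟩
  · exact Set.nonempty_compl.2 ((Order.Ideal.isProper_iff J).1 hJ.toIsProper)
  · exact fun a b ha hab hb => ha (J.lower hab hb)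
  · intro a b ha hb hab
    rcases hJ.mem_or_mem hab with h' | h' <;> [exact ha h'; exact hb h']
  · intro h'
    have : ⊥ ∈ (J : Set L)ᶜ := h' ▸ Set.mem_univ _
    exact this J.bot_mem
  · intro a b hab
    by_contra h'
    push_neg at h'
    simp only [Set.mem_compl_iff, not_not] at h'
    exact hab (J.sup_mem h'.1 h'.2)
  · exact fun a ha haJ => Set.disjoint_left.1 hdisj ha haJ
  · exact fun y hy hyP => hyP (hIJ hy)

/-- If `x ≰ y` there is a prime filter containing `x` but not `y`. -/
lemma exists_primeFilter_sep {L : Type*} [DistribLattice L] [BoundedOrder L]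
    {x y : L} (h : ¬ x ≤ y) : ∃ P : Set L, IsPrimeFilter P ∧ x ∈ P ∧ y ∉ P := by
  have hd : Disjoint ((Order.PFilter.principal x : Order.PFilter L) : Set L)
      ((Order.Ideal.principal y : Order.Ideal L) : Set L) := by
    rw [Set.disjoint_left]
    intro z hz hz'
    exact h (le_trans (Order.PFilter.mem_principal.1 hz) (Order.Ideal.mem_principal.1 hz'))
  obtain ⟨P, hP, hsub, hdis⟩ := exists_primeFilter_aux _ _ hd
  exact ⟨P, hP, hsub (Order.PFilter.mem_principal.2 le_rfl),
    hdis y (Order.Ideal.mem_principal.2 le_rfl)⟩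

/-- For a bounded distributive lattice with pseudocomplement `s`, the map
`h(x) = {P prime filter | x ∈ P}` into the up-sets of prime filters (with
pseudocomplement `A* = {P | ↑P ∩ A = ∅}`) is injective and `h(x*) = h(x)*`. -/
theorem primeFilter_embedding_star {L : Type*} [DistribLattice L] [BoundedOrder L]
    (s : L → L)
    (hpc : ∀ x z, x ⊓ z = ⊥ ↔ z ≤ s x) :
    Function.Injective (fun x : L => {P : {P : Set L // IsPrimeFilter P} | x ∈ P.1}) ∧
    ∀ x : L, {P : {P : Set L // IsPrimeFilter P} | s x ∈ P.1}
      = {P : {P : Set L // IsPrimeFilter P} |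
          ∀ Q : {P : Set L // IsPrimeFilter P}, P.1 ⊆ Q.1 →
            Q ∉ {R : {P : Set L // IsPrimeFilter P} | x ∈ R.1}} := by
  constructor
  · intro a b hab
    have key : ∀ P : {P : Set L // IsPrimeFilter P}, a ∈ P.1 ↔ b ∈ P.1 := fun P =>
      Set.ext_iff.1 hab P
    refine le_antisymm ?_ ?_
    · by_contra h
      obtain ⟨P, hP, h1, h2⟩ := exists_primeFilter_sep h
      exact h2 ((key ⟨P, hP⟩).1 h1)
    · by_contra h
      obtain ⟨P, hP, h1, h2⟩ := exists_primeFilter_sep h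
      exact h2 ((key ⟨P, hP⟩).2 h1)
  · intro x
    ext P
    simp only [Set.mem_setOf_eq]
    constructor
    · intro hsx Q hPQ hxQ
      have hbot : (⊥ : L) ∈ Q.1 := by
        have h1 := Q.2.2.2.1 x (s x) hxQ (hPQ hsx)
        rwa [(hpc x (s x)).2 le_rfl] at h1
      exact Q.2.2.2.2.1 (Set.eq_univ_of_forall fun z => Q.2.2.1 ⊥ z hbot bot_le)
    · intro hQ
      by_contra hsx
      set F : Set L := {z | ∃ p ∈ P.1, p ⊓ x ≤ z} with hF
      have hFpf : Order.IsPFilter F := by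
        refine Order.IsPFilter.of_def ?_ ?_ ?_
        · obtain ⟨p, hp⟩ := P.2.1
          exact ⟨p ⊓ x, p, hp, le_rfl⟩
        · rintro a ⟨p, hp, hpa⟩ b ⟨q, hq, hqb⟩
          exact ⟨p ⊓ q ⊓ x, ⟨p ⊓ q, P.2.2.2.1 p q hp hq, le_rfl⟩,
            le_trans (inf_le_inf_right x inf_le_left) hpa,
            le_trans (inf_le_inf_right x inf_le_right) hqb⟩
        · rintro a b hab ⟨p, hp, hpa⟩
          exact ⟨p, hp, hpa.trans hab⟩
      have hd : Disjoint ((hFpf.toPFilter : Order.PFilter L) : Set L)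
          ((Order.Ideal.principal (⊥ : L) : Order.Ideal L) : Set L) := by
        rw [Set.disjoint_left]
        rintro z ⟨p, hp, hpz⟩ hz'
        have hz : z = ⊥ := le_antisymm (Order.Ideal.mem_principal.1 hz') bot_le
        have : p ⊓ x = ⊥ := le_antisymm (hpz.trans_eq hz) bot_le
        rw [inf_comm] at this
        exact hsx (P.2.2.1 p (s x) hp ((hpc x p).1 this))
      obtain ⟨Q, hQpf, hsub, _⟩ := exists_primeFilter_aux _ _ hd
      have hPQ : P.1 ⊆ Q := fun p hp => hsub ⟨p, hp, inf_le_left⟩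
      exact hQ ⟨Q, hQpf⟩ hPQ (hsub ⟨_, (P.2.1.choose_spec), inf_le_right⟩)
end
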